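/- arXiv:2501.02406 — 2 statements merged into one kernel-verified Lean document; each statement's English description precedes it below -/
import Mathlib

section
/- Let p, q be probability distributions on a finite alphabet such that q(y) ≥ ε for all y in the support of p, with 0 < ε ≤ 1/2. Let Y ~ p and Z = -log q(Y). Then E_p[exp(|Z - E_p[Z]| / t)] ≤ 2 for t = -4 log ε, i.e., Z - E_p[Z] has sub-exponential norm at most -4 log ε. -/
/-! On the support of `p` we have `ε ≤ q ≤ 1`, so `Z = -log q(Y)` takes values in
`[0, -log ε]`; so does its mean, hence `|Z - E Z| ≤ -log ε`. Each exponent is then at most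
`1/4`, and `exp (1/4) ≤ 2`. -/

open Finset Real

section WeightedSum

variable {X : Type*} [Fintype X] {p : X → ℝ}

theorem weighted_sum_le_weighted_sum_of_le_on_support (hp0 : ∀ y, 0 ≤ p y) {f g : X → ℝ}
    (hfg : ∀ y, 0 < p y → f y ≤ g y) : ∑ y, p y * f y ≤ ∑ y, p y * g y := by
  refine sum_le_sum fun y _ => ?_
  rcases (hp0 y).eq_or_lt with hy | hy
  · simp [← hy]
  · exact mul_le_mul_of_nonneg_left (hfg y hy) hy.le

theorem weighted_sum_const (hp1 : ∑ y, p y = 1) (c : ℝ) : ∑ y, p y * c = c := by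
  rw [← sum_mul, hp1, one_mul]

theorem weighted_sum_mem_Icc_of_mem_Icc_on_support (hp0 : ∀ y, 0 ≤ p y)
    (hp1 : ∑ y, p y = 1) {f : X → ℝ} {a b : ℝ} (hf : ∀ y, 0 < p y → f y ∈ Set.Icc a b) :
    ∑ y, p y * f y ∈ Set.Icc a b := by
  constructor
  · calc a = ∑ y, p y * a := (weighted_sum_const hp1 a).symm
      _ ≤ ∑ y, p y * f y :=
        weighted_sum_le_weighted_sum_of_le_on_support hp0 fun y hy => (hf y hy).1
  · calc ∑ y, p y * f y ≤ ∑ y, p y * b :=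
          weighted_sum_le_weighted_sum_of_le_on_support hp0 fun y hy => (hf y hy).2
      _ = b := weighted_sum_const hp1 b

theorem abs_sub_weighted_sum_le_of_mem_Icc_on_support (hp0 : ∀ y, 0 ≤ p y)
    (hp1 : ∑ y, p y = 1) {f : X → ℝ} {a b : ℝ} (hf : ∀ y, 0 < p y → f y ∈ Set.Icc a b)
    {y : X} (hy : 0 < p y) : |f y - ∑ z, p z * f z| ≤ b - a :=
  Real.dist_eq (f y) _ ▸ Real.dist_le_of_mem_Icc (hf y hy)
    (weighted_sum_mem_Icc_of_mem_Icc_on_support hp0 hp1 hf)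

end WeightedSum

theorem neg_log_mem_Icc_of_mem_Icc {ε x : ℝ} (hε : 0 < ε) (hx : x ∈ Set.Icc ε 1) :
    -log x ∈ Set.Icc 0 (-log ε) :=
  ⟨neg_nonneg.2 (log_nonpos (hε.le.trans hx.1) hx.2), neg_le_neg (log_le_log hε hx.1)⟩

theorem div_four_mul_le_quarter {x L : ℝ} (hx0 : 0 ≤ x) (hxL : x ≤ L) : x / (4 * L) ≤ 1 / 4 := by
  rw [mul_comm, ← div_div, div_le_div_iff_of_pos_right four_pos]
  exact div_le_one_of_le₀ hxL (hx0.trans hxL)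

theorem exp_quarter_le_two : exp (1 / 4) ≤ 2 := by
  calc exp (1 / 4) ≤ exp (log 2) := exp_le_exp.2 (by linarith [log_two_gt_d9])
    _ = 2 := exp_log two_pos

theorem subexp_norm_cross_log_likelihood_general {X : Type*} [Fintype X] (p q : X → ℝ) (ε : ℝ)
    (hp0 : ∀ y, 0 ≤ p y) (hp1 : ∑ y, p y = 1)
    (hq0 : ∀ y, 0 ≤ q y) (hq1 : ∑ y, q y = 1)
    (hε : 0 < ε)
    (hfloor : ∀ y, 0 < p y → ε ≤ q y) :
    ∑ y, p y *
        Real.exp (|(-Real.log (q y)) - (-∑ z, p z * Real.log (q z))| /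
          (-4 * Real.log ε)) ≤ 2 := by
  have hq_le_one (y : X) : q y ≤ 1 := hq1 ▸ single_le_sum (fun z _ => hq0 z) (mem_univ y)
  have hZ (y : X) (hy : 0 < p y) : -log (q y) ∈ Set.Icc 0 (-log ε) :=
    neg_log_mem_Icc_of_mem_Icc hε ⟨hfloor y hy, hq_le_one y⟩
  have hmean : -∑ z, p z * log (q z) = ∑ z, p z * -log (q z) := by
    simp only [mul_neg, sum_neg_distrib]
  have hexponent (y : X) (hy : 0 < p y) :
      |(-log (q y)) - (-∑ z, p z * log (q z))| / (-4 * log ε) ≤ 1 / 4 := by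
    have hdev := abs_sub_weighted_sum_le_of_mem_Icc_on_support hp0 hp1 hZ hy
    rw [sub_zero] at hdev
    rw [hmean, show -4 * log ε = 4 * -log ε by ring]
    exact div_four_mul_le_quarter (abs_nonneg _) hdev
  calc _ ≤ ∑ y, p y * exp (1 / 4) := weighted_sum_le_weighted_sum_of_le_on_support hp0
          fun y hy => exp_le_exp.2 (hexponent y hy)
    _ = exp (1 / 4) := weighted_sum_const hp1 _
    _ ≤ 2 := exp_quarter_le_two

/-- For `Z = -log q(Y)` with `Y ~ p`, where `q(y) ≥ ε` on the support of `p`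
and `0 < ε ≤ 1/2`, `E_p[exp(|Z - E_p Z| / (-4 log ε))] ≤ 2`. -/
theorem subexp_norm_cross_log_likelihood {X : Type*} [Fintype X] (p q : X → ℝ) (ε : ℝ)
    (hp0 : ∀ y, 0 ≤ p y) (hp1 : ∑ y, p y = 1)
    (hq0 : ∀ y, 0 ≤ q y) (hq1 : ∑ y, q y = 1)
    (hε : 0 < ε) (hε1 : ε ≤ 1 / 2)
    (hfloor : ∀ y, 0 < p y → ε ≤ q y) :
    ∑ y, p y *
        Real.exp (|(-Real.log (q y)) - (-∑ z, p z * Real.log (q z))| /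
          (-4 * Real.log ε)) ≤ 2 :=
  subexp_norm_cross_log_likelihood_general p q ε hp0 hp1 hq0 hq1 hε hfloor
end

section
/- Let a sequence of tokens Y_1,…,Y_N in a finite alphabet of size K be generated sequentially by a model A, where given Y_1,…,Y_{n-1} the next token Y_n has conditional law p_n^A. Define the log-perplexity l_A = -(1/N)∑_n log p_n^A(Y_n) and the average entropy h_N(A,A) = (1/N)∑_n H(p_n^A) where H is Shannon entropy of the conditional distribution. Then there is a universal constant c_1 > 0 such that for all t > 0, P(|l_A - h_N(A,A)| ≥ t) ≤ 2 exp(-(N t/(c_1 log K)) min(1, t/(c_1 log K))). -/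
/-- Probability of the token sequence `y` under the sequential model with
history-dependent conditional laws `pA`. -/
noncomputable def seqProb {X : Type*} (pA : List X → X → ℝ) {N : ℕ}
    (y : Fin N → X) : ℝ :=
  ∏ n : Fin N, pA ((List.ofFn y).take n.val) (y n)

/-- Log-perplexity of the sequence `y` under the evaluator model `pA`. -/
noncomputable def logPerp {X : Type*} (pA : List X → X → ℝ) {N : ℕ}
    (y : Fin N → X) : ℝ :=
  -((1 : ℝ) / N) * ∑ n : Fin N, Real.log (pA ((List.ofFn y).take n.val) (y n))

/-- Shannon entropy of a distribution on a finite alphabet. -/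
noncomputable def shannonEntropy {X : Type*} [Fintype X] (q : X → ℝ) : ℝ :=
  -∑ x, q x * Real.log (q x)

/-- Average entropy `h_N(A,A)` along the sequence `y`. -/
noncomputable def avgEntropy {X : Type*} [Fintype X] (pA : List X → X → ℝ) {N : ℕ}
    (y : Fin N → X) : ℝ :=
  ((1 : ℝ) / N) * ∑ n : Fin N, shannonEntropy (pA ((List.ofFn y).take n.val))

/-!
Write `D_n = -log p_n(Y_n) - H(p_n)`, so that `N (l_A - h_N(A,A)) = ∑ₙ D_n` and each `D_n` has
conditional mean zero given the history. Conditionally on the history, `D_n` is sub-exponential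
at scale `L = log K`: with `v = -log q - L ≥ -L`, the bound `e^u ≤ 1 + u + u² e^{|u|}` gives
`E e^{μ D} ≤ exp (μ² (64 + 2 L²))` for `|μ| ≤ 1/4`, `|μ| L ≤ 1/4`, the heavy upper tail of `v`
being paid for by `E_q e^{v/2} = K^{-1/2} ∑ √q ≤ 1` (Cauchy–Schwarz). Summing out the tokens from
the last one backwards raises this bound to the power `N` for the joint moment generating
function, and a two-sided Chernoff bound with `μ = min (1/10) (t / (400 L)) / L` finishes.
-/

open Real Finset

lemma exp_sub_one_le_mul_exp (x : ℝ) : exp x - 1 ≤ x * exp x := by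
  have hinv : exp (-x) * exp x = 1 := by rw [← exp_add, neg_add_cancel, exp_zero]
  nlinarith [one_sub_le_exp_neg x, exp_pos x]

lemma exp_le_one_add_add_sq_mul_exp_abs (x : ℝ) : exp x ≤ 1 + x + x ^ 2 * exp |x| := by
  have hquad : x * (exp x - 1) ≤ x ^ 2 * exp |x| := by
    rcases le_or_gt 0 x with hx | hx
    · rw [abs_of_nonneg hx]
      nlinarith [mul_le_mul_of_nonneg_left (exp_sub_one_le_mul_exp x) hx]
    · rw [abs_of_neg hx]
      nlinarith [add_one_le_exp x, one_le_exp (neg_nonneg.2 hx.le)]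
  linarith [exp_sub_one_le_mul_exp x]

lemma sq_le_mul_exp_div_four {v : ℝ} (hv : 0 ≤ v) : v ^ 2 ≤ 64 * exp (v / 4) := by
  have hsq : exp (v / 8) ^ 2 = exp (v / 4) := by rw [← exp_nat_mul]; ring_nf
  nlinarith [add_one_le_exp (v / 8)]

lemma exp_mul_le_of_neg_le {μ L v : ℝ} (hμ : |μ| ≤ 1 / 4) (hμL : |μ| * L ≤ 1 / 4)
    (hv : -L ≤ v) : exp (μ * v) ≤ 1 + μ * v + μ ^ 2 * (64 * exp (v / 2) + 2 * L ^ 2) := by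
  suffices h : (μ * v) ^ 2 * exp (|μ| * |v|) ≤ μ ^ 2 * (64 * exp (v / 2) + 2 * L ^ 2) by
    have := exp_le_one_add_add_sq_mul_exp_abs (μ * v)
    rw [abs_mul] at this
    linarith
  rw [mul_pow, mul_assoc]
  refine mul_le_mul_of_nonneg_left ?_ (sq_nonneg μ)
  rcases le_or_gt 0 v with hv0 | hv0
  · have hexp : exp (|μ| * |v|) ≤ exp (v / 4) := by
      rw [exp_le_exp, abs_of_nonneg hv0]; nlinarith [abs_nonneg μ]
    have hhalf : exp (v / 4) * exp (v / 4) = exp (v / 2) := by rw [← exp_add]; ring_nf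
    nlinarith [sq_le_mul_exp_div_four hv0, exp_pos (v / 4), sq_nonneg L]
  · have hvL : |v| ≤ L := by rw [abs_of_neg hv0]; linarith
    have hexp : exp (|μ| * |v|) ≤ 4 / 3 := by
      calc exp (|μ| * |v|) ≤ exp (1 / 4) := by
            rw [exp_le_exp]; nlinarith [mul_le_mul_of_nonneg_left hvL (abs_nonneg μ)]
        _ ≤ 1 / (1 - 1 / 4) := exp_bound_div_one_sub_of_interval (by norm_num) (by norm_num)
        _ = 4 / 3 := by norm_num
    have hv2 : v ^ 2 ≤ L ^ 2 := by rw [← sq_abs]; exact pow_le_pow_left₀ (abs_nonneg v) hvL 2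
    nlinarith [exp_pos (v / 2), exp_pos (|μ| * |v|), sq_nonneg v]

lemma mul_exp_neg_log_div_two {q : ℝ} (hq : 0 ≤ q) : q * exp (-log q / 2) = √q := by
  rcases hq.eq_or_lt with rfl | hq
  · simp
  nth_rewrite 1 [← exp_log hq]
  rw [← exp_add, sqrt_eq_rpow, rpow_def_of_pos hq]
  ring_nf

section OneStep

variable {X : Type*} [Fintype X] {q : X → ℝ}

lemma sum_sqrt_le_sqrt_card (hq0 : ∀ x, 0 ≤ q x) (hq1 : ∑ x, q x = 1) :
    ∑ x, √(q x) ≤ √(Fintype.card X) := by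
  simpa [hq1] using Real.sum_sqrt_mul_sqrt_le univ (fun _ => zero_le_one) hq0

lemma sum_mul_exp_half_surprisal_sub_log_card_le_one (hq0 : ∀ x, 0 ≤ q x)
    (hq1 : ∑ x, q x = 1) :
    ∑ x, q x * exp ((-log (q x) - log (Fintype.card X)) / 2) ≤ 1 := by
  have hK : 0 < (Fintype.card X : ℝ) := by
    have : Nonempty X := by
      by_contra h
      simp [not_nonempty_iff.1 h] at hq1
    exact_mod_cast Fintype.card_pos
  have hterm : ∀ x, q x * exp ((-log (q x) - log (Fintype.card X)) / 2)
      = √(q x) / √(Fintype.card X) := fun x => by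
    rw [sub_div, exp_sub, ← mul_div_assoc, mul_exp_neg_log_div_two (hq0 x), exp_half,
      exp_log hK]
  simp_rw [hterm, ← sum_div]
  exact div_le_one_of_le₀ (sum_sqrt_le_sqrt_card hq0 hq1) (sqrt_nonneg _)

theorem sum_mul_exp_surprisal_sub_entropy_le (hq0 : ∀ x, 0 ≤ q x) (hq1 : ∑ x, q x = 1)
    {μ : ℝ} (hμ : |μ| ≤ 1 / 4) (hμL : |μ| * log (Fintype.card X) ≤ 1 / 4) :
    ∑ x, q x * exp (μ * (-log (q x) - shannonEntropy q))
      ≤ exp (μ ^ 2 * (64 + 2 * log (Fintype.card X) ^ 2)) := by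
  set L := log (Fintype.card X)
  set H := shannonEntropy q
  set v : X → ℝ := fun x => -log (q x) - L
  have hv : ∀ x, -L ≤ v x := fun x => by
    have : log (q x) ≤ 0 :=
      log_nonpos (hq0 x) (hq1 ▸ single_le_sum (fun i _ => hq0 i) (mem_univ x))
    simp only [v]; linarith
  have hmean : ∑ x, q x * v x = H - L := by
    simp only [v, H, shannonEntropy, mul_sub, sum_sub_distrib, ← sum_mul, hq1]
    simp only [mul_neg, sum_neg_distrib]; ring
  have hhalf : ∑ x, q x * exp (v x / 2) ≤ 1 :=
    sum_mul_exp_half_surprisal_sub_log_card_le_one hq0 hq1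
  calc ∑ x, q x * exp (μ * (-log (q x) - H))
        = exp (μ * (L - H)) * ∑ x, q x * exp (μ * v x) := by
        rw [mul_sum]; congr! 1 with x; rw [mul_left_comm, ← exp_add]; simp only [v]; ring_nf
    _ ≤ exp (μ * (L - H)) *
          ∑ x, q x * (1 + μ * v x + μ ^ 2 * (64 * exp (v x / 2) + 2 * L ^ 2)) := by
        gcongr with x
        · exact hq0 x
        · exact exp_mul_le_of_neg_le hμ hμL (hv x)
    _ = exp (μ * (L - H)) *
          (1 + μ * (H - L) + μ ^ 2 * (64 * ∑ x, q x * exp (v x / 2) + 2 * L ^ 2)) := by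
        simp only [mul_add, sum_add_distrib, mul_left_comm (q _), ← mul_sum, ← sum_mul, mul_one,
          hq1, hmean, one_mul]
    _ ≤ exp (μ * (L - H)) * (1 + μ * (H - L) + μ ^ 2 * (64 + 2 * L ^ 2)) := by gcongr; linarith
    _ ≤ exp (μ * (L - H)) * exp (μ * (H - L) + μ ^ 2 * (64 + 2 * L ^ 2)) := by
        gcongr; linarith [add_one_le_exp (μ * (H - L) + μ ^ 2 * (64 + 2 * L ^ 2))]
    _ = exp (μ ^ 2 * (64 + 2 * L ^ 2)) := by rw [← exp_add]; ring_nf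

end OneStep

section Sequential

variable {X : Type*} {N : ℕ}

lemma seqProb_nonneg {r : List X → X → ℝ} (hr : ∀ h x, 0 ≤ r h x) (y : Fin N → X) :
    0 ≤ seqProb r y :=
  prod_nonneg fun _ _ => hr _ _

lemma seqProb_snoc (r : List X → X → ℝ) (f : Fin N → X) (x : X) :
    seqProb r (Fin.snoc f x : Fin (N + 1) → X) = seqProb r f * r (List.ofFn f) x := by
  have hlist : List.ofFn (Fin.snoc f x : Fin (N + 1) → X) = List.ofFn f ++ [x] := by
    rw [List.ofFn_succ']; simp
  simp only [seqProb, Fin.prod_univ_castSucc, Fin.snoc_castSucc, Fin.snoc_last, hlist,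
    Fin.val_castSucc, Fin.val_last]
  congr 1
  · exact prod_congr rfl fun n _ => by
      rw [List.take_append_of_le_length (by simp [n.isLt.le])]
  · simp

lemma seqProb_mul_exp_sum (r g : List X → X → ℝ) (y : Fin N → X) :
    seqProb r y * exp (∑ n : Fin N, g ((List.ofFn y).take n) (y n))
      = seqProb (fun h x => r h x * exp (g h x)) y := by
  simp only [seqProb, exp_sum, prod_mul_distrib]

theorem sum_seqProb_le_pow [Fintype X] {r : List X → X → ℝ} (hr : ∀ h x, 0 ≤ r h x) {E : ℝ}
    (hE : ∀ h, ∑ x, r h x ≤ E) (N : ℕ) : ∑ y : Fin N → X, seqProb r y ≤ E ^ N := by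
  induction N with
  | zero => simp [seqProb]
  | succ N ih =>
    have hsnoc : ∀ x (f : Fin N → X), (Fin.snocEquiv fun _ => X) (x, f) = Fin.snoc f x :=
      fun _ _ => rfl
    rw [← (Fin.snocEquiv fun _ => X).sum_comp, Fintype.sum_prod_type_right]
    simp only [hsnoc, seqProb_snoc, ← mul_sum, pow_succ]
    calc ∑ f : Fin N → X, seqProb r f * ∑ x, r (List.ofFn f) x
        ≤ ∑ f : Fin N → X, seqProb r f * E := by
          gcongr with f
          · exact seqProb_nonneg hr f
          · exact hE _
      _ ≤ E ^ N * E := by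
          rw [← sum_mul]
          gcongr
          exact (sum_nonneg fun x _ => hr [] x).trans (hE [])

end Sequential

lemma sum_ite_le_abs_le_exp_mul {ι : Type*} [Fintype ι] {w s : ι → ℝ} (hw : ∀ i, 0 ≤ w i)
    {θ : ℝ} (hθ : 0 ≤ θ) (τ : ℝ) :
    ∑ i, (if τ ≤ |s i| then w i else 0)
      ≤ exp (-(θ * τ)) * (∑ i, w i * exp (θ * s i) + ∑ i, w i * exp (-θ * s i)) := by
  rw [← sum_add_distrib, mul_sum]
  refine sum_le_sum fun i _ => ?_
  split_ifs with hτ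
  · have hcover : 1 ≤ exp (θ * s i - θ * τ) + exp (-θ * s i - θ * τ) := by
      rcases le_abs'.1 hτ with h | h
      · linarith [one_le_exp (show 0 ≤ -θ * s i - θ * τ by nlinarith), exp_pos (θ * s i - θ * τ)]
      · linarith [one_le_exp (show 0 ≤ θ * s i - θ * τ by nlinarith), exp_pos (-θ * s i - θ * τ)]
    calc w i ≤ w i * (exp (θ * s i - θ * τ) + exp (-θ * s i - θ * τ)) :=
          le_mul_of_one_le_right (hw i) hcover
      _ = _ := by simp only [sub_eq_add_neg, exp_add, ← neg_mul]; ring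
  · exact mul_nonneg (exp_pos _).le (add_nonneg (mul_nonneg (hw i) (exp_pos _).le)
      (mul_nonneg (hw i) (exp_pos _).le))

section Perplexity

variable {X : Type*} [Fintype X] {N : ℕ}

noncomputable def surprisalExcess (p : List X → X → ℝ) (h : List X) (x : X) : ℝ :=
  -log (p h x) - shannonEntropy (p h)

lemma natCast_mul_logPerp_sub_avgEntropy (p : List X → X → ℝ) (hN : N ≠ 0) (y : Fin N → X) :
    N * (logPerp p y - avgEntropy p y)
      = ∑ n : Fin N, surprisalExcess p ((List.ofFn y).take n) (y n) := by
  have : (N : ℝ) ≠ 0 := Nat.cast_ne_zero.2 hN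
  simp only [logPerp, avgEntropy, surprisalExcess, sum_sub_distrib, sum_neg_distrib]
  field_simp

theorem sum_seqProb_mul_exp_surprisalExcess_le {p : List X → X → ℝ}
    (hp : ∀ h, (∀ x, 0 ≤ p h x) ∧ ∑ x, p h x = 1) {μ : ℝ} (hμ : |μ| ≤ 1 / 4)
    (hμL : |μ| * log (Fintype.card X) ≤ 1 / 4) (N : ℕ) :
    ∑ y : Fin N → X,
        seqProb p y * exp (μ * ∑ n : Fin N, surprisalExcess p ((List.ofFn y).take n) (y n))
      ≤ exp (μ ^ 2 * (64 + 2 * log (Fintype.card X) ^ 2)) ^ N := by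
  simp only [mul_sum, seqProb_mul_exp_sum p fun h x => μ * surprisalExcess p h x]
  refine sum_seqProb_le_pow (fun h x => mul_nonneg ((hp h).1 x) (exp_pos _).le) (fun h => ?_) N
  exact sum_mul_exp_surprisal_sub_entropy_le (hp h).1 (hp h).2 hμ hμL

theorem sum_ite_le_abs_logPerp_sub_avgEntropy_le {p : List X → X → ℝ}
    (hp : ∀ h, (∀ x, 0 ≤ p h x) ∧ ∑ x, p h x = 1) (hN : N ≠ 0) {θ : ℝ} (hθ0 : 0 ≤ θ)
    (hθ : θ ≤ 1 / 4) (hθL : θ * log (Fintype.card X) ≤ 1 / 4) (t : ℝ) :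
    ∑ y : Fin N → X, (if t ≤ |logPerp p y - avgEntropy p y| then seqProb p y else 0)
      ≤ 2 * exp (N * (-(θ * t) + θ ^ 2 * (64 + 2 * log (Fintype.card X) ^ 2))) := by
  set C := 64 + 2 * log (Fintype.card X) ^ 2
  have hθ' : |θ| ≤ 1 / 4 := (abs_of_nonneg hθ0).trans_le hθ
  have hθL' : |θ| * log (Fintype.card X) ≤ 1 / 4 := by rwa [abs_of_nonneg hθ0]
  calc _ ≤ exp (-(θ * N * t)) *
          (∑ y : Fin N → X, seqProb p y * exp (θ * N * (logPerp p y - avgEntropy p y))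
            + ∑ y : Fin N → X, seqProb p y * exp (-(θ * N) * (logPerp p y - avgEntropy p y))) :=
        sum_ite_le_abs_le_exp_mul (seqProb_nonneg fun h x => (hp h).1 x) (by positivity) t
    _ = exp (-(θ * N * t)) *
          (∑ y : Fin N → X, seqProb p y *
              exp (θ * ∑ n : Fin N, surprisalExcess p ((List.ofFn y).take n) (y n))
            + ∑ y : Fin N → X, seqProb p y *
              exp (-θ * ∑ n : Fin N, surprisalExcess p ((List.ofFn y).take n) (y n))) := by
        simp only [neg_mul, mul_assoc, natCast_mul_logPerp_sub_avgEntropy p hN]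
    _ ≤ exp (-(θ * N * t)) * (exp (θ ^ 2 * C) ^ N + exp ((-θ) ^ 2 * C) ^ N) := by
        gcongr
        · exact sum_seqProb_mul_exp_surprisalExcess_le hp hθ' hθL' N
        · exact sum_seqProb_mul_exp_surprisalExcess_le hp (by rwa [abs_neg])
            (by rwa [abs_neg]) N
    _ = 2 * exp (N * (-(θ * t) + θ ^ 2 * C)) := by
        rw [neg_sq, ← two_mul, ← exp_nat_mul, mul_left_comm, ← exp_add]
        congr 2; ring

end Perplexity

lemma neg_min_mul_add_sq_le_neg_mul_min {a : ℝ} (ha : 0 ≤ a) :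
    -(min (1 / 10) (a / 400) * a) + 200 * min (1 / 10) (a / 400) ^ 2
      ≤ -(a / 40 * min 1 (a / 40)) := by
  have hm : min (1 / 10) (a / 400) = min 1 (a / 40) / 10 := by
    rw [← min_div_div_right (by norm_num)]; norm_num [div_div]
  have hquad : 200 * min (1 / 10) (a / 400) ^ 2 ≤ min (1 / 10) (a / 400) * a / 2 := by
    have := min_le_right (1 / 10 : ℝ) (a / 400)
    nlinarith [le_min (by norm_num : (0 : ℝ) ≤ 1 / 10) (by positivity : 0 ≤ a / 400)]
  rw [hm] at hquad ⊢
  nlinarith [le_min zero_le_one (by positivity : 0 ≤ a / 40)]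

/-- Theorem 1(a): there is a universal constant `c₁ > 0` such that for any
sequential model `A` on a finite alphabet of size `K ≥ 2` and any `t > 0`,
`P(|l_A - h_N(A,A)| ≥ t) ≤ 2 exp(-(N t/(c₁ log K)) min(1, t/(c₁ log K)))`. -/
theorem logPerp_concentration_same_model :
    ∃ c1 : ℝ, 0 < c1 ∧
      ∀ (X : Type) [Fintype X], ∀ (pA : List X → X → ℝ),
        (∀ h : List X, (∀ x, 0 ≤ pA h x) ∧ ∑ x, pA h x = 1) →
        2 ≤ Fintype.card X →
        ∀ N : ℕ, 0 < N → ∀ t : ℝ, 0 < t →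
          (∑ y : Fin N → X,
              if t ≤ |logPerp pA y - avgEntropy pA y| then seqProb pA y else 0)
            ≤ 2 * Real.exp (-(N * t / (c1 * Real.log (Fintype.card X))) *
                min 1 (t / (c1 * Real.log (Fintype.card X)))) := by
  refine ⟨40, by norm_num, fun X _ p hp hK N hN t ht => ?_⟩
  set L := log (Fintype.card X)
  have hL : log 2 ≤ L := log_le_log two_pos (by exact_mod_cast hK)
  have hL0 : 0 < L := (log_pos one_lt_two).trans_le hL
  set m := min (1 / 10) (t / L / 400)
  have hm0 : 0 ≤ m := le_min (by norm_num) (by positivity)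
  have hm : m ≤ 1 / 10 := min_le_left _ _
  have hmL : m / L * L = m := div_mul_cancel₀ _ hL0.ne'
  calc _ ≤ 2 * exp (N * (-(m / L * t) + (m / L) ^ 2 * (64 + 2 * L ^ 2))) :=
        sum_ite_le_abs_logPerp_sub_avgEntropy_le hp hN.ne' (by positivity)
          (by nlinarith [log_two_gt_d9]) (by linarith) t
    _ ≤ 2 * exp (N * (-(m * (t / L)) + 200 * m ^ 2)) := by
        gcongr 2 * exp (_ * ?_)
        have hsq : (m / L) ^ 2 * (64 + 2 * L ^ 2) ≤ 200 * m ^ 2 :=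
          calc (m / L) ^ 2 * (64 + 2 * L ^ 2) ≤ (m / L) ^ 2 * (200 * L ^ 2) := by
                gcongr; nlinarith [log_two_gt_d9]
            _ = 200 * (m / L * L) ^ 2 := by ring
            _ = 200 * m ^ 2 := by rw [hmL]
        rw [show m / L * t = m * (t / L) by ring]
        linarith
    _ ≤ 2 * exp (N * -(t / L / 40 * min 1 (t / L / 40))) := by
        gcongr 2 * exp (_ * ?_)
        exact neg_min_mul_add_sq_le_neg_mul_min (by positivity)
    _ = _ := by
        rw [div_div, mul_comm L]
        congr 2; ring
end
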